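/- Let N ≥ 3, 1 < k < N-1, 0 < p < (N-1)/(k-1) and c > 0. Then there is no measurable function v : ℝ^{N-1} → [0,∞] with v > 0 a.e., v(x') < ∞ for a.e. x' ∈ ℝ^{N-1}, and v(x') ≥ c ∫_{ℝ^{N-1}} v(y')^p |x'-y'|^{-(k-1)} dy' for a.e. x' ∈ ℝ^{N-1}. -/

import Mathlib

/-!
A positive supersolution is bootstrapped into ever better power lower bounds. Integrating the
inequality over the unit ball gives `v(x) ≳ (1 + |x|)^{-s}` with `s = k - 1`; and if
`v ≳ (1 + |y|)^{-a}`, integrating over the annulus `1 + |x| ≤ |y| < 2(1 + |x|)` gives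
`v(x) ≳ (1 + |x|)^{-(pa + s - d)}` with `d = N - 1`. Since `s < d` and `ps < d`, the map
`a ↦ pa + s - d` lowers the exponent by a fixed amount as long as `pa + s > d`, so after finitely
many steps `pa + s ≤ d`. Then every dyadic annulus `2^j(1 + |x|) ≤ |y| < 2^{j+1}(1 + |x|)`
contributes at least a fixed positive amount to the integral at `x`, which is therefore infinite,
forcing `v = ∞` almost everywhere.
-/

open MeasureTheory ENNReal Filter

noncomputable section

/-- The point `(y', t) ∈ ℝ^N` for `y' ∈ ℝ^{N-1}`, `t ∈ ℝ`. -/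
def up (N : ℕ) (y' : EuclideanSpace ℝ (Fin (N - 1))) (t : ℝ) : EuclideanSpace ℝ (Fin N) :=
  (WithLp.equiv 2 (Fin N → ℝ)).symm fun i => if h : (i : ℕ) < N - 1 then y' ⟨i, h⟩ else t

/-- The last coordinate `x_N` of `x ∈ ℝ^N`. -/
def ht (N : ℕ) (x : EuclideanSpace ℝ (Fin N)) : ℝ :=
  if h : N - 1 < N then x ⟨N - 1, h⟩ else 0

/-- Reflection `x̄ = (x', -x_N)` of `x = (x', x_N)` in the hyperplane `x_N = 0`. -/
def reflN (N : ℕ) (x : EuclideanSpace ℝ (Fin N)) : EuclideanSpace ℝ (Fin N) :=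
  (WithLp.equiv 2 (Fin N → ℝ)).symm fun i => if (i : ℕ) < N - 1 then x i else -x i

/-- Surface area `σ_N` of the unit sphere in `ℝ^N` (equal to `N` times the unit ball volume). -/
def sphereArea (N : ℕ) : ℝ :=
  N * (volume (Metric.ball (0 : EuclideanSpace ℝ (Fin N)) 1)).toReal

/-- The open upper half space `ℝ^N_+ = ℝ^{N-1} × (0,∞)`. -/
def upperHalf (N : ℕ) : Set (EuclideanSpace ℝ (Fin N)) := {x | 0 < ht N x}

/-- `H_u(x') = ∫_{ℝ^{N-1}} u(y',0)^p |x'-y'|^{-k} dy'`. -/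
def Hu (N : ℕ) (p k : ℝ) (u : EuclideanSpace ℝ (Fin N) → ℝ)
    (x' : EuclideanSpace ℝ (Fin (N - 1))) : ℝ≥0∞ :=
  ∫⁻ y', ENNReal.ofReal (u (up N y' 0)) ^ p * ENNReal.ofReal ‖x' - y'‖ ^ (-k)

/-- The Newtonian potential `U^ν(x) = (1/((N-2)σ_N)) ∫ |x-y|^{2-N} dν(y)`. -/
def NewtPot (N : ℕ) (ν : Measure (EuclideanSpace ℝ (Fin N)))
    (x : EuclideanSpace ℝ (Fin N)) : ℝ :=
  (((N : ℝ) - 2) * sphereArea N)⁻¹ * (∫⁻ y, ENNReal.ofReal ‖x - y‖ ^ ((2:ℝ) - N) ∂ν).toReal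

/-- The Green potential `∫_{ℝ^N_+} G(x,y) dμ(y)` for the Neumann Green function
`G(x,y) = (|x-y|^{2-N} + |x̄-y|^{2-N})/((N-2)σ_N)` of the half space. -/
def GreenPot (N : ℕ) (μ : Measure (EuclideanSpace ℝ (Fin N)))
    (x : EuclideanSpace ℝ (Fin N)) : ℝ :=
  (((N : ℝ) - 2) * sphereArea N)⁻¹ *
    (∫⁻ y, (ENNReal.ofReal ‖x - y‖ ^ ((2:ℝ) - N)
          + ENNReal.ofReal ‖reflN N x - y‖ ^ ((2:ℝ) - N)) ∂μ).toReal

/-- `μ` is a nonzero Radon (locally finite Borel) measure whose support is contained in the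
open upper half space and whose Newtonian potential is finite everywhere. -/
def AdmissibleMeasure (N : ℕ) (μ : Measure (EuclideanSpace ℝ (Fin N))) : Prop :=
  μ ≠ 0 ∧ IsLocallyFiniteMeasure μ ∧
    (∃ F : Set (EuclideanSpace ℝ (Fin N)), IsClosed F ∧ F ⊆ upperHalf N ∧ μ Fᶜ = 0) ∧
    (∀ x, (∫⁻ y, ENNReal.ofReal ‖x - y‖ ^ ((2:ℝ) - N) ∂μ) < ⊤)

/-- A measurable function `u` is a positive solution of problem (1.1):
(i) `u > 0` a.e. in `ℝ^N_+`, and for a.e. `x' ∈ ℝ^{N-1}`, `u(z) → u(x',0)` as `z → (x',0)`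
with `z ∈ ℝ^N_+`;
(ii) `H_u < ∞` a.e. in `ℝ^{N-1}`, and `∫_{ℝ^{N-1}} H_u(y')|x-(y',0)|^{2-N} dy' < ∞` for
a.e. `x ∈ ℝ^N_+`;
(iii) `u(x) = ∫_{ℝ^N_+} G(x,y) dμ(y)
　　　　+ (2λ/((N-2)σ_N)) ∫∫ u(z',0)^p |x-(y',0)|^{2-N} |y'-z'|^{-k} dz' dy'`
for a.e. `x ∈ ℝ^N_+`. -/
def IsPosSolution (N : ℕ) (p lam k : ℝ) (μ : Measure (EuclideanSpace ℝ (Fin N)))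
    (u : EuclideanSpace ℝ (Fin N) → ℝ) : Prop :=
  Measurable u ∧
  (∀ᵐ x ∂(volume.restrict (upperHalf N)), 0 < u x) ∧
  (∀ᵐ x' ∂(volume : Measure (EuclideanSpace ℝ (Fin (N - 1)))),
    Tendsto u (nhdsWithin (up N x' 0) (upperHalf N)) (nhds (u (up N x' 0)))) ∧
  (∀ᵐ x' ∂(volume : Measure (EuclideanSpace ℝ (Fin (N - 1)))), Hu N p k u x' < ⊤) ∧
  (∀ᵐ x ∂(volume.restrict (upperHalf N)),
    (∫⁻ y', Hu N p k u y' * ENNReal.ofReal ‖x - up N y' 0‖ ^ ((2:ℝ) - N)) < ⊤) ∧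
  (∀ᵐ x ∂(volume.restrict (upperHalf N)),
    ENNReal.ofReal (u x) =
      ENNReal.ofReal (((N : ℝ) - 2) * sphereArea N)⁻¹ *
        (∫⁻ y, (ENNReal.ofReal ‖x - y‖ ^ ((2:ℝ) - N)
              + ENNReal.ofReal ‖reflN N x - y‖ ^ ((2:ℝ) - N)) ∂μ) +
      ENNReal.ofReal (2 * lam / (((N : ℝ) - 2) * sphereArea N)) *
        ∫⁻ y', ENNReal.ofReal ‖x - up N y' 0‖ ^ ((2:ℝ) - N) * Hu N p k u y')

/-- A measurable function `u` is a positive solution of problem (1.1) with `μ ≡ 0`: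
conditions (i), (ii) as above and
(iii) `u(x) = (2λ/((N-2)σ_N)) ∫∫ u(z',0)^p |x-(y',0)|^{2-N} |y'-z'|^{-k} dz' dy'`
for a.e. `x ∈ ℝ^N_+`. -/
def IsPosSolution0 (N : ℕ) (p lam k : ℝ) (u : EuclideanSpace ℝ (Fin N) → ℝ) : Prop :=
  Measurable u ∧
  (∀ᵐ x ∂(volume.restrict (upperHalf N)), 0 < u x) ∧
  (∀ᵐ x' ∂(volume : Measure (EuclideanSpace ℝ (Fin (N - 1)))),
    Tendsto u (nhdsWithin (up N x' 0) (upperHalf N)) (nhds (u (up N x' 0)))) ∧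
  (∀ᵐ x' ∂(volume : Measure (EuclideanSpace ℝ (Fin (N - 1)))), Hu N p k u x' < ⊤) ∧
  (∀ᵐ x ∂(volume.restrict (upperHalf N)),
    (∫⁻ y', Hu N p k u y' * ENNReal.ofReal ‖x - up N y' 0‖ ^ ((2:ℝ) - N)) < ⊤) ∧
  (∀ᵐ x ∂(volume.restrict (upperHalf N)),
    ENNReal.ofReal (u x) =
      ENNReal.ofReal (2 * lam / (((N : ℝ) - 2) * sphereArea N)) *
        ∫⁻ y', ENNReal.ofReal ‖x - up N y' 0‖ ^ ((2:ℝ) - N) * Hu N p k u y')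

/-- The boundary trace `x' ↦ u(x',0)` belongs to `L^q_loc(ℝ^{N-1})`. -/
def BdryLocLp (N : ℕ) (q : ℝ) (u : EuclideanSpace ℝ (Fin N) → ℝ) : Prop :=
  ∀ K : Set (EuclideanSpace ℝ (Fin (N - 1))), IsCompact K →
    MemLp (fun x' => u (up N x' 0)) (ENNReal.ofReal q) (volume.restrict K)

open Module Set
open scoped Function Pointwise

lemma ENNReal.rpow_neg_le_rpow_neg {x y : ℝ≥0∞} {z : ℝ} (hz : 0 ≤ z) (h : x ≤ y) :
    y ^ (-z) ≤ x ^ (-z) := by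
  rw [ENNReal.rpow_neg, ENNReal.rpow_neg]
  exact ENNReal.inv_le_inv.2 (ENNReal.rpow_le_rpow h hz)

section Annulus

variable {E : Type*} [NormedAddCommGroup E]

def dyadicAnnulus (r : ℝ) : Set E := (fun y : E ↦ ‖y‖) ⁻¹' Ico r (2 * r)

lemma measurableSet_dyadicAnnulus [MeasurableSpace E] [OpensMeasurableSpace E] (r : ℝ) :
    MeasurableSet (dyadicAnnulus r : Set E) :=
  measurable_norm measurableSet_Ico

variable [NormedSpace ℝ E]

lemma dyadicAnnulus_eq_smul {r : ℝ} (hr : 0 < r) :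
    (dyadicAnnulus r : Set E) = r • (dyadicAnnulus 1 : Set E) := by
  ext y
  rw [mem_smul_set_iff_inv_smul_mem₀ hr.ne']
  simp only [dyadicAnnulus, mem_preimage, mem_Ico, norm_smul, norm_inv, Real.norm_of_nonneg hr.le,
    le_inv_mul_iff₀ hr, inv_mul_lt_iff₀ hr, mul_one, one_mul, mul_comm r]

lemma measure_dyadicAnnulus_one_ne_zero [Nontrivial E] [MeasurableSpace E] [OpensMeasurableSpace E]
    (μ : Measure E) [μ.IsOpenPosMeasure] : μ (dyadicAnnulus 1) ≠ 0 := by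
  obtain ⟨z, hz⟩ := exists_norm_eq E (by norm_num : (0 : ℝ) ≤ 3 / 2)
  have hopen : IsOpen ((fun y : E ↦ ‖y‖) ⁻¹' Ioo 1 2) := isOpen_Ioo.preimage continuous_norm
  refine (pos_iff_ne_zero.1 ((hopen.measure_pos μ ⟨z, ?_⟩).trans_le (measure_mono ?_)))
  · simp only [mem_preimage, hz, mem_Ioo]; norm_num
  · intro y hy
    simp only [dyadicAnnulus, mem_preimage, mem_Ioo, mem_Ico] at hy ⊢
    constructor <;> linarith

lemma measure_dyadicAnnulus [MeasurableSpace E] [BorelSpace E] [FiniteDimensional ℝ E]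
    (μ : Measure E) [μ.IsAddHaarMeasure] {r : ℝ} (hr : 0 < r) :
    μ (dyadicAnnulus r) = ENNReal.ofReal r ^ (finrank ℝ E : ℝ) * μ (dyadicAnnulus 1) := by
  rw [dyadicAnnulus_eq_smul hr, Measure.addHaar_smul_of_nonneg μ hr.le, ENNReal.ofReal_pow hr.le,
    ENNReal.rpow_natCast]

end Annulus

lemma exists_subcritical_of_forall_imp {P : ℝ → Prop} {p s d : ℝ} (hs : 0 ≤ s) (hsd : s < d)
    (hpsd : p * s < d) (hP : P s) (hstep : ∀ a, 0 ≤ a → P a → P (p * a + s - d)) :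
    ∃ a, 0 ≤ a ∧ p * a + s ≤ d ∧ P a := by
  set δ := d - max (p * s) s
  have hδ0 : 0 < δ := sub_pos.2 (max_lt hpsd hsd)
  have hdecr : ∀ a, 0 ≤ a → a ≤ s → p * a + s - d ≤ a - δ := by
    intro a ha has
    rcases le_total p 1 with hp1 | hp1
    · nlinarith [le_max_right (p * s) s]
    · nlinarith [le_max_left (p * s) s]
  have key : ∀ n : ℕ, ∀ a, 0 ≤ a → a ≤ s → a ≤ n * δ → P a → ∃ b, 0 ≤ b ∧ p * b + s ≤ d ∧ P b := by
    intro n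
    induction n with
    | zero =>
      intro a ha _ han hPa
      obtain rfl : a = 0 := le_antisymm (by simpa using han) ha
      exact ⟨0, le_rfl, by linarith, hPa⟩
    | succ n ih =>
      intro a ha has han hPa
      by_cases hcrit : p * a + s ≤ d
      · exact ⟨a, ha, hcrit, hPa⟩
      have := hdecr a ha has
      exact ih _ (by linarith) (by linarith) (by push_cast at han; linarith) (hstep a ha hPa)
  obtain ⟨n, hn⟩ := exists_nat_ge (s / δ)
  exact key n s hs le_rfl ((div_le_iff₀ hδ0).1 hn) hP

section Supersolution

variable {E : Type*} [NormedAddCommGroup E] [MeasurableSpace E]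

def HasPowerLowerBound (μ : Measure E) (v : E → ℝ≥0∞) (a : ℝ) : Prop :=
  ∃ C ≠ 0, ∀ᵐ y ∂μ, C * ENNReal.ofReal (1 + ‖y‖) ^ (-a) ≤ v y

-- the Riesz potential of `f` of order `d - s`, without its normalising constant
def rieszPotential (μ : Measure E) (s : ℝ) (f : E → ℝ≥0∞) (x : E) : ℝ≥0∞ :=
  ∫⁻ y, f y * ENNReal.ofReal ‖x - y‖ ^ (-s) ∂μ

variable {μ : Measure E} {v : E → ℝ≥0∞} {c : ℝ≥0∞} {a b p s : ℝ}

lemma HasPowerLowerBound.rpow (h : HasPowerLowerBound μ v a) (hp : 0 ≤ p) :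
    HasPowerLowerBound μ (fun y ↦ v y ^ p) (p * a) := by
  obtain ⟨C, hC, hCv⟩ := h
  refine ⟨C ^ p, (ENNReal.rpow_pos_of_nonneg (pos_iff_ne_zero.2 hC) hp).ne', ?_⟩
  filter_upwards [hCv] with y hy
  calc C ^ p * ENNReal.ofReal (1 + ‖y‖) ^ (-(p * a))
      = (C * ENNReal.ofReal (1 + ‖y‖) ^ (-a)) ^ p := by
        rw [ENNReal.mul_rpow_of_nonneg _ _ hp, ← ENNReal.rpow_mul, neg_mul, mul_comm a p]
    _ ≤ v y ^ p := ENNReal.rpow_le_rpow hy hp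

lemma hasPowerLowerBound_of_supersolution [OpensMeasurableSpace E] [μ.IsOpenPosMeasure]
    (hv : AEMeasurable v μ) (hpos : ∀ᵐ x ∂μ, 0 < v x) (hp : 0 ≤ p) (hs : 0 ≤ s) (hc : c ≠ 0)
    (hsup : ∀ᵐ x ∂μ, c * rieszPotential μ s (fun y ↦ v y ^ p) x ≤ v x) :
    HasPowerLowerBound μ v s := by
  set I := ∫⁻ y in Metric.ball 0 1, v y ^ p ∂μ
  have hI : I ≠ 0 := by
    rw [Ne, lintegral_eq_zero_iff' (hv.pow_const p).restrict]
    intro h0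
    have hfalse : ∀ᵐ y ∂μ.restrict (Metric.ball 0 1), False := by
      filter_upwards [h0, ae_restrict_of_ae hpos] with y hy0 hypos
      exact (ENNReal.rpow_pos_of_nonneg hypos hp).ne' hy0
    rw [eventually_false_iff_eq_bot, ae_eq_bot, Measure.restrict_eq_zero] at hfalse
    exact (Metric.measure_ball_pos μ 0 one_pos).ne' hfalse
  refine ⟨c * I, mul_ne_zero hc hI, ?_⟩
  filter_upwards [hsup] with x hx
  have hball : ∀ y ∈ Metric.ball (0 : E) 1, v y ^ p * ENNReal.ofReal (1 + ‖x‖) ^ (-s) ≤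
      v y ^ p * ENNReal.ofReal ‖x - y‖ ^ (-s) := fun y hy ↦
    mul_le_mul_right (ENNReal.rpow_neg_le_rpow_neg hs (ENNReal.ofReal_le_ofReal
      (by linarith [norm_sub_le x y, mem_ball_zero_iff.1 hy]))) _
  calc c * I * ENNReal.ofReal (1 + ‖x‖) ^ (-s)
      ≤ c * ∫⁻ y in Metric.ball 0 1, v y ^ p * ENNReal.ofReal (1 + ‖x‖) ^ (-s) ∂μ := by
        rw [mul_assoc]; exact mul_le_mul_right (lintegral_mul_const_le _ _) c
    _ ≤ c * rieszPotential μ s (fun y ↦ v y ^ p) x :=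
        mul_le_mul_right ((setLIntegral_mono' measurableSet_ball hball).trans
          (setLIntegral_le_lintegral _ _)) c
    _ ≤ v x := hx

variable [NormedSpace ℝ E] [BorelSpace E] [FiniteDimensional ℝ E] [Nontrivial E]
  [μ.IsAddHaarMeasure]

lemma HasPowerLowerBound.exists_le_setLIntegral_dyadicAnnulus {f : E → ℝ≥0∞}
    (h : HasPowerLowerBound μ f b) (hb : 0 ≤ b) (hs : 0 ≤ s) :
    ∃ K ≠ 0, ∀ x r, 1 + ‖x‖ ≤ r →
      K * ENNReal.ofReal r ^ ((finrank ℝ E : ℝ) - (b + s)) ≤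
        ∫⁻ y in dyadicAnnulus r, f y * ENNReal.ofReal ‖x - y‖ ^ (-s) ∂μ := by
  obtain ⟨C, hC, hCf⟩ := h
  refine ⟨C * 3 ^ (-(b + s)) * μ (dyadicAnnulus 1), ?_, fun x r hr ↦ ?_⟩
  · exact mul_ne_zero (mul_ne_zero hC (by simp [ENNReal.rpow_eq_zero_iff]))
      (measure_dyadicAnnulus_one_ne_zero μ)
  have hr0 : 0 < r := by linarith [norm_nonneg x]
  have hr0' : ENNReal.ofReal r ≠ 0 := by simpa using hr0
  have h3r : ENNReal.ofReal (3 * r) = 3 * ENNReal.ofReal r := by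
    rw [ENNReal.ofReal_mul (by norm_num), ENNReal.ofReal_ofNat]
  -- on the annulus both `1 + ‖y‖` and `‖x - y‖` are at most `3r`
  have hpt : ∀ y ∈ dyadicAnnulus r, C * ENNReal.ofReal (1 + ‖y‖) ^ (-b) ≤ f y →
      C * ENNReal.ofReal (3 * r) ^ (-(b + s)) ≤ f y * ENNReal.ofReal ‖x - y‖ ^ (-s) := by
    intro y hy hfy
    have hy' : ‖y‖ < 2 * r := hy.2
    rw [neg_add, ENNReal.rpow_add _ _ (by simp [h3r, hr0']) ENNReal.ofReal_ne_top, ← mul_assoc]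
    gcongr ?_ * ?_
    · refine le_trans (mul_le_mul_right ?_ C) hfy
      exact ENNReal.rpow_neg_le_rpow_neg hb (ENNReal.ofReal_le_ofReal (by linarith [norm_nonneg x]))
    · exact ENNReal.rpow_neg_le_rpow_neg hs
        (ENNReal.ofReal_le_ofReal (by linarith [norm_sub_le x y]))
  calc C * 3 ^ (-(b + s)) * μ (dyadicAnnulus 1) *
        ENNReal.ofReal r ^ ((finrank ℝ E : ℝ) - (b + s))
      = C * ENNReal.ofReal (3 * r) ^ (-(b + s)) * μ (dyadicAnnulus r) := by
        rw [measure_dyadicAnnulus μ hr0, h3r, ENNReal.mul_rpow_of_ne_zero (by norm_num) hr0',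
          sub_eq_add_neg, ENNReal.rpow_add _ _ hr0' ENNReal.ofReal_ne_top]
        ring
    _ = ∫⁻ y in dyadicAnnulus r, C * ENNReal.ofReal (3 * r) ^ (-(b + s)) ∂μ :=
        (setLIntegral_const _ _).symm
    _ ≤ _ := lintegral_mono_ae <| by
        filter_upwards [ae_restrict_mem (measurableSet_dyadicAnnulus r), ae_restrict_of_ae hCf]
          with y hy hfy using hpt y hy hfy

lemma HasPowerLowerBound.of_supersolution (h : HasPowerLowerBound μ v a) (ha : 0 ≤ a)
    (hp : 0 ≤ p) (hs : 0 ≤ s) (hc : c ≠ 0)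
    (hsup : ∀ᵐ x ∂μ, c * rieszPotential μ s (fun y ↦ v y ^ p) x ≤ v x) :
    HasPowerLowerBound μ v (p * a + s - finrank ℝ E) := by
  obtain ⟨K, hK, hKle⟩ := (h.rpow hp).exists_le_setLIntegral_dyadicAnnulus (mul_nonneg hp ha) hs
  refine ⟨c * K, mul_ne_zero hc hK, ?_⟩
  filter_upwards [hsup] with x hx
  calc c * K * ENNReal.ofReal (1 + ‖x‖) ^ (-(p * a + s - finrank ℝ E))
      = c * (K * ENNReal.ofReal (1 + ‖x‖) ^ ((finrank ℝ E : ℝ) - (p * a + s))) := by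
        rw [neg_sub, mul_assoc]
    _ ≤ c * rieszPotential μ s (fun y ↦ v y ^ p) x :=
        mul_le_mul_right ((hKle x _ le_rfl).trans (setLIntegral_le_lintegral _ _)) c
    _ ≤ v x := hx

lemma HasPowerLowerBound.rieszPotential_eq_top (h : HasPowerLowerBound μ v a) (ha : 0 ≤ a)
    (hp : 0 ≤ p) (hs : 0 ≤ s) (hcrit : p * a + s ≤ finrank ℝ E) (x : E) :
    rieszPotential μ s (fun y ↦ v y ^ p) x = ⊤ := by
  obtain ⟨K, hK, hKle⟩ := (h.rpow hp).exists_le_setLIntegral_dyadicAnnulus (mul_nonneg hp ha) hs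
  set r : ℕ → ℝ := fun j ↦ (1 + ‖x‖) * 2 ^ j
  have hK_le : ∀ j,
      K ≤ ∫⁻ y in dyadicAnnulus (r j), v y ^ p * ENNReal.ofReal ‖x - y‖ ^ (-s) ∂μ := by
    intro j
    have hrj : 1 ≤ r j := one_le_mul_of_one_le_of_one_le (by linarith [norm_nonneg x])
      (one_le_pow₀ one_le_two)
    refine le_trans (le_mul_of_one_le_right' ?_) (hKle x (r j) (le_mul_of_one_le_right
      (by positivity) (one_le_pow₀ one_le_two)))
    simpa using ENNReal.rpow_le_rpow (ENNReal.one_le_ofReal.2 hrj) (sub_nonneg.2 hcrit)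
  have hdisj : Pairwise (Disjoint on fun j ↦ (dyadicAnnulus (r j) : Set E)) := by
    have hmono : Monotone r := fun i j hij ↦
      mul_le_mul_of_nonneg_left (pow_le_pow_right₀ one_le_two hij) (by positivity)
    have hsucc : ∀ j, r (Order.succ j) = 2 * r j := fun j ↦ by
      simp only [r, Order.succ_eq_add_one, pow_succ]; ring
    intro i j hij
    have := hmono.pairwise_disjoint_on_Ico_succ hij
    simp only [Function.onFun, hsucc] at this
    exact this.preimage _
  refine eq_top_iff.2 ?_
  calc ⊤ = ∑' _ : ℕ, K := (ENNReal.tsum_const_eq_top_of_ne_zero hK).symm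
    _ ≤ ∑' j, ∫⁻ y in dyadicAnnulus (r j), v y ^ p * ENNReal.ofReal ‖x - y‖ ^ (-s) ∂μ :=
        ENNReal.tsum_le_tsum hK_le
    _ = ∫⁻ y in ⋃ j, dyadicAnnulus (r j), v y ^ p * ENNReal.ofReal ‖x - y‖ ^ (-s) ∂μ :=
        (lintegral_iUnion (fun _ ↦ measurableSet_dyadicAnnulus _) hdisj _).symm
    _ ≤ rieszPotential μ s (fun y ↦ v y ^ p) x := setLIntegral_le_lintegral _ _

theorem ae_eq_top_of_supersolution (hv : AEMeasurable v μ) (hpos : ∀ᵐ x ∂μ, 0 < v x)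
    (hp : 0 ≤ p) (hs : 0 ≤ s) (hsd : s < finrank ℝ E) (hpsd : p * s < finrank ℝ E) (hc : c ≠ 0)
    (hsup : ∀ᵐ x ∂μ, c * rieszPotential μ s (fun y ↦ v y ^ p) x ≤ v x) :
    ∀ᵐ x ∂μ, v x = ⊤ := by
  obtain ⟨a, ha, hcrit, hva⟩ := exists_subcritical_of_forall_imp hs hsd hpsd
    (hasPowerLowerBound_of_supersolution hv hpos hp hs hc hsup)
    fun a ha hva ↦ hva.of_supersolution ha hp hs hc hsup
  filter_upwards [hsup] with x hx
  rwa [hva.rieszPotential_eq_top ha hp hs hcrit x, ENNReal.mul_top hc, top_le_iff] at hx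

end Supersolution

/-- Nonexistence for the integral inequality (3.6): if `1 < k < N-1` and
`0 < p < (N-1)/(k-1)` then there is no measurable `v : ℝ^{N-1} → [0,∞]`, a.e. positive
and finite, with `v(x') ≥ c ∫ v(y')^p |x'-y'|^{-(k-1)} dy'` a.e. -/
theorem no_supersolution_integral_inequality
    (N : ℕ) (hN : 3 ≤ N) (k p c : ℝ)
    (hk1 : 1 < k) (hkN : k < (N : ℝ) - 1)
    (hp0 : 0 < p) (hp : p < ((N : ℝ) - 1) / (k - 1)) (hc : 0 < c) :
    ¬ ∃ v : EuclideanSpace ℝ (Fin (N - 1)) → ℝ≥0∞, Measurable v ∧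
      (∀ᵐ x' ∂(volume : Measure (EuclideanSpace ℝ (Fin (N - 1)))), 0 < v x') ∧
      (∀ᵐ x' ∂(volume : Measure (EuclideanSpace ℝ (Fin (N - 1)))), v x' < ⊤) ∧
      (∀ᵐ x' ∂(volume : Measure (EuclideanSpace ℝ (Fin (N - 1)))),
        ENNReal.ofReal c * ∫⁻ y', v y' ^ p * ENNReal.ofReal ‖x' - y'‖ ^ (-(k - 1)) ≤ v x') := by
  rintro ⟨v, hv, hpos, hfin, hsup⟩
  have : Nonempty (Fin (N - 1)) := ⟨⟨0, by omega⟩⟩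
  have hd : (finrank ℝ (EuclideanSpace ℝ (Fin (N - 1))) : ℝ) = N - 1 := by
    rw [finrank_euclideanSpace_fin, Nat.cast_sub (by omega), Nat.cast_one]
  have hpk : p * (k - 1) < N - 1 := (lt_div_iff₀ (by linarith)).1 hp
  have htop := ae_eq_top_of_supersolution hv.aemeasurable hpos hp0.le (by linarith)
    (by rw [hd]; linarith) (by rwa [hd]) (by simpa using hc) hsup
  obtain ⟨x, hx, hxtop⟩ := (hfin.and htop).exists
  exact hx.ne hxtop

end
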